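/- Let (I, ≤) be a directed preorder and (X_i, f_{ji}) a regular directed system of topological spaces over (I, ≤). If every X_i is a T₁ (Fréchet) space, then the direct limit X_∞ is a T₁ space. -/

import Mathlib

universe u v

/-- A directed system of topological spaces over a preorder `I`:
spaces `X i` with continuous transition maps `map i j : X i → X j` for `i ≤ j`,
satisfying the identity and composition laws. -/
structure TopDirectedSystem (I : Type u) [Preorder I] : Type (max u (v + 1)) where
  X : I → Type v
  top : ∀ i, TopologicalSpace (X i)
  map : ∀ i j, i ≤ j → X i → X j
  map_continuous : ∀ i j (h : i ≤ j), Continuous (map i j h)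
  map_id : ∀ i (x : X i), map i i le_rfl x = x
  map_comp : ∀ i j k (hij : i ≤ j) (hjk : j ≤ k) (x : X i),
    map j k hjk (map i j hij x) = map i k (hij.trans hjk) x

attribute [instance] TopDirectedSystem.top

namespace TopDirectedSystem

variable {I : Type u} [Preorder I] (S : TopDirectedSystem.{u, v} I)

/-- The relation on the disjoint union: `⟨i, x⟩ ∼ ⟨j, y⟩` iff there is `k ≥ i, j`
with `f_{ki} x = f_{kj} y`. -/
def Rel (p q : Σ i, S.X i) : Prop :=
  ∃ (k : I) (hik : p.1 ≤ k) (hjk : q.1 ≤ k), S.map p.1 k hik p.2 = S.map q.1 k hjk q.2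

/-- The direct limit: the quotient of the disjoint union (with the disjoint union
topology) by `Rel`, carrying the quotient topology. -/
def Limit : Type (max u v) := Quot S.Rel

instance : TopologicalSpace S.Limit :=
  inferInstanceAs (TopologicalSpace (Quot S.Rel))

/-- The canonical map `f_{*i} : X i → X_∞`. -/
def ι (i : I) (x : S.X i) : S.Limit :=
  Quot.mk S.Rel ⟨i, x⟩

/-- A directed system is regular if all transition maps are injective
(continuous) open maps. -/
def Regular : Prop :=
  ∀ i j (h : i ≤ j), Function.Injective (S.map i j h) ∧ IsOpenMap (S.map i j h)

end TopDirectedSystem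

/-! Injectivity of the transition maps makes the equation `f_{ki} x = f_{kj} y`
independent of the chosen upper bound `k`. Hence the fibre of the point `[⟨i, x⟩]` in `X_j` is the
preimage of the closed point `f_{ki} x` under the continuous map `f_{kj}`, for one fixed `k`, and a
subset of the limit all of whose fibres are closed is closed in the quotient topology. -/

namespace TopDirectedSystem

variable {I : Type u} [Preorder I] (S : TopDirectedSystem.{u, v} I)

theorem isClosed_iff_forall_isClosed_ι_preimage {s : Set S.Limit} :
    IsClosed s ↔ ∀ i, IsClosed (S.ι i ⁻¹' s) :=
  isQuotientMap_quot_mk.isClosed_preimage.symm.trans isClosed_sigma_iff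

theorem map_eq_map_of_le {i j k m : I} (hik : i ≤ k) (hjk : j ≤ k) (hkm : k ≤ m)
    {x : S.X i} {y : S.X j} (h : S.map i k hik x = S.map j k hjk y) :
    S.map i m (hik.trans hkm) x = S.map j m (hjk.trans hkm) y := by
  rw [← S.map_comp _ _ _ hik hkm, ← S.map_comp _ _ _ hjk hkm, h]

variable [IsDirected I (· ≤ ·)]

theorem rel_equivalence : Equivalence S.Rel where
  refl p := ⟨p.1, le_rfl, le_rfl, rfl⟩
  symm := fun ⟨k, hik, hjk, h⟩ => ⟨k, hjk, hik, h.symm⟩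
  trans := by
    rintro p q r ⟨k, hpk, hqk, hpq⟩ ⟨k', hqk', hrk', hqr⟩
    obtain ⟨m, hkm, hk'm⟩ := directed_of (· ≤ ·) k k'
    exact ⟨m, hpk.trans hkm, hrk'.trans hk'm,
      (S.map_eq_map_of_le _ _ hkm hpq).trans (S.map_eq_map_of_le _ _ hk'm hqr)⟩

theorem ι_eq_ι_iff {i j : I} (x : S.X i) (y : S.X j) :
    S.ι i x = S.ι j y ↔ S.Rel ⟨i, x⟩ ⟨j, y⟩ :=
  Quot.eq.trans S.rel_equivalence.eqvGen_iff

theorem rel_iff_map_eq (hinj : ∀ i j (h : i ≤ j), Function.Injective (S.map i j h))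
    {i j k : I} (hik : i ≤ k) (hjk : j ≤ k) (x : S.X i) (y : S.X j) :
    S.Rel ⟨i, x⟩ ⟨j, y⟩ ↔ S.map i k hik x = S.map j k hjk y := by
  refine ⟨fun ⟨k', hik', hjk', h⟩ => ?_, fun h => ⟨k, hik, hjk, h⟩⟩
  obtain ⟨m, hkm, hk'm⟩ := directed_of (· ≤ ·) k k'
  exact hinj k m hkm (by rw [S.map_comp, S.map_comp]; exact S.map_eq_map_of_le _ _ hk'm h)

theorem ι_preimage_singleton (hinj : ∀ i j (h : i ≤ j), Function.Injective (S.map i j h))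
    {i j k : I} (hik : i ≤ k) (hjk : j ≤ k) (x : S.X i) :
    S.ι j ⁻¹' {S.ι i x} = S.map j k hjk ⁻¹' {S.map i k hik x} := by
  ext y
  simp only [Set.mem_preimage, Set.mem_singleton_iff]
  rw [S.ι_eq_ι_iff, S.rel_iff_map_eq hinj hjk hik]

end TopDirectedSystem

theorem limit_t1_general {I : Type u} [Preorder I] [IsDirected I (· ≤ ·)]
    (S : TopDirectedSystem.{u, v} I) (hreg : S.Regular) (h : ∀ i, T1Space (S.X i)) :
    T1Space S.Limit := by
  have hinj i j (hij : i ≤ j) : Function.Injective (S.map i j hij) := (hreg i j hij).1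
  refine ⟨Quot.ind fun ⟨i, x⟩ => (S.isClosed_iff_forall_isClosed_ι_preimage).2 fun j => ?_⟩
  obtain ⟨k, hjk, hik⟩ := directed_of (· ≤ ·) j i
  change IsClosed (S.ι j ⁻¹' {S.ι i x})
  rw [S.ι_preimage_singleton hinj hik hjk]
  exact isClosed_singleton.preimage (S.map_continuous j k hjk)

/-- the direct limit of a regular directed system of T1Space
topological spaces is a T1Space. -/
theorem limit_t1 {I : Type u} [Preorder I] [Nonempty I] [IsDirected I (· ≤ ·)]
    (S : TopDirectedSystem.{u, v} I) (hreg : S.Regular) (h : ∀ i, T1Space (S.X i)) :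
    T1Space S.Limit :=
  limit_t1_general S hreg h
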